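/- arXiv:2209.06294 — 7 statements merged into one kernel-verified Lean document; each statement's English description precedes it below -/
import Mathlib

section
/- Let G = (V, E) be an undirected graph on V = {1,...,q}, let (D, μ) be a σ-finite measure space, and let (φ_l)_{l∈ℕ} be an orthonormal family in L²(μ). For each l ∈ ℕ let Σ_l and Σ*_l be q×q real symmetric positive definite matrices, write σ_{lij} = (Σ_l)_{ij}, σ*_{lij} = (Σ*_l)_{ij}, and ω*_{lij} = ((Σ*_l)⁻¹)_{ij}. Assume the square-summability conditions: for all i,j, Σ_l σ_{lij}² < ∞, Σ_l σ*_{lij}² < ∞, and Σ_l (ω*_{lij} / (ω*_{lii} ω*_{ljj} − ω*_{lij}²))² < ∞. Define, as elements of L²(μ ⊗ μ), C_{ij} = Σ_l σ_{lij} (φ_l ⊗ φ_l), C*_{ij} = Σ_l σ*_{lij} (φ_l ⊗ φ_l), and K*_{ij} = Σ_l (−ω*_{lij} / (ω*_{lii} ω*_{ljj} − ω*_{lij}²)) (φ_l ⊗ φ_l). Then the following are equivalent: (a) C*_{ij} = C_{ij} in L²(μ ⊗ μ) for every pair with i = j or (i,j) ∈ E, and K*_{ij} = 0 in L²(μ ⊗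 μ) for every pair with i ≠ j and (i,j) ∉ E; (b) for every l, Σ*_l is the covariance selection of Σ_l with respect to G, i.e., σ*_{lij} = σ_{lij} whenever i = j or (i,j) ∈ E, and ω*_{lij} = 0 whenever i ≠ j and (i,j) ∉ E. -/
/-!
The products `φ_l ⊗ φ_l` form an orthonormal family in `L²(μ ⊗ μ)`, so the coefficients of an
`L²`-convergent series `∑ a_l φ_l ⊗ φ_l` are its inner products with the `φ_l ⊗ φ_l`: two such
series agree almost everywhere iff their coefficient sequences agree. Condition (a) is therefore
the coefficientwise condition (b), once one notes that the `l`-th coefficient of `K*_{ij}`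
vanishes iff `ω*_{lij}` does, its denominator being a `2 × 2` principal minor of the positive
definite matrix `(Σ*_l)⁻¹`.
-/

open MeasureTheory Filter Topology Finset

/-- `B` is the covariance selection (Dempster) of `A` with respect to the graph `G`:
`B` is positive definite, agrees with `A` on the diagonal and the edge set, and its
inverse vanishes off the diagonal and the edge set. -/
def IsCovSel {q : ℕ} (G : SimpleGraph (Fin q)) (A B : Matrix (Fin q) (Fin q) ℝ) : Prop :=
  B.PosDef ∧ (∀ i j, (i = j ∨ G.Adj i j) → B i j = A i j) ∧
    ∀ i j, i ≠ j → ¬ G.Adj i j → B⁻¹ i j = 0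

open scoped RealInnerProductSpace

theorem Matrix.PosDef.mul_diag_sub_sq_pos {n : Type*} [Fintype n] [DecidableEq n]
    {M : Matrix n n ℝ} (hM : M.PosDef) {i j : n} (hij : i ≠ j) :
    0 < M i i * M j j - M i j ^ 2 := by
  have h := (hM.submatrix (injective_pair_iff_ne.2 hij)).det_pos
  have hsym : M j i = M i j := by simpa using hM.isHermitian.apply i j
  rw [Matrix.det_fin_two] at h
  simpa [hsym, sq] using h

theorem Orthonormal.eq_inner_of_tendsto_sum {𝕜 E : Type*} [RCLike 𝕜] [NormedAddCommGroup E]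
    [InnerProductSpace 𝕜 E] {v : ℕ → E} (hv : Orthonormal 𝕜 v) {a : ℕ → 𝕜} {x : E}
    (h : Tendsto (fun n => ∑ l ∈ range n, a l • v l) atTop (𝓝 x)) (m : ℕ) :
    a m = inner 𝕜 (v m) x := by
  refine tendsto_nhds_unique (tendsto_const_nhds.congr' ?_) (tendsto_const_nhds.inner h)
  filter_upwards [eventually_gt_atTop m] with n hn
  exact (hv.inner_right_sum a (mem_range.2 hn)).symm

namespace MeasureTheory

theorem Lp.exists_memLp_tendsto_toLp {α E ι : Type*} [MeasurableSpace α] {μ : Measure α}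
    [NormedAddCommGroup E] {p : ENNReal} [Fact (1 ≤ p)] {l : Filter ι} [l.NeBot]
    {F : ι → Lp E p μ} {f : α → E} (hfm : AEStronglyMeasurable f μ)
    (h : Tendsto (fun n => eLpNorm (⇑(F n) - f) p μ) l (𝓝 0)) :
    ∃ hf : MemLp f p μ, Tendsto F l (𝓝 (hf.toLp f)) := by
  obtain ⟨n, hn⟩ := (h.eventually (gt_mem_nhds ENNReal.zero_lt_top)).exists
  have hdiff : MemLp (⇑(F n) - f) p μ := ⟨(Lp.aestronglyMeasurable _).sub hfm, hn⟩
  have hmem : MemLp f p μ := by simpa using (Lp.memLp (F n)).sub hdiff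
  exact ⟨hmem, Lp.tendsto_Lp_of_tendsto_eLpNorm f hmem h⟩

namespace L2

variable {α β : Type*} [MeasurableSpace α] [MeasurableSpace β] {μ : Measure α} {ν : Measure β}

theorem memLp_mul_prod (f : Lp ℝ 2 μ) (g : Lp ℝ 2 ν) :
    MemLp (fun z : α × β => f z.1 * g z.2) 2 (μ.prod ν) := by
  have hmeas : AEStronglyMeasurable (fun z : α × β => f z.1 * g z.2) (μ.prod ν) :=
    ((Lp.aestronglyMeasurable f).comp_quasiMeasurePreserving
      Measure.quasiMeasurePreserving_fst).mul
    ((Lp.aestronglyMeasurable g).comp_quasiMeasurePreserving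
      Measure.quasiMeasurePreserving_snd)
  rw [memLp_two_iff_integrable_sq hmeas]
  simpa only [mul_pow] using (Lp.memLp f).integrable_sq.mul_prod (Lp.memLp g).integrable_sq

noncomputable def tensor (f : Lp ℝ 2 μ) (g : Lp ℝ 2 ν) : Lp ℝ 2 (μ.prod ν) :=
  (memLp_mul_prod f g).toLp _

theorem coeFn_tensor (f : Lp ℝ 2 μ) (g : Lp ℝ 2 ν) :
    ⇑(tensor f g) =ᵐ[μ.prod ν] fun z => f z.1 * g z.2 :=
  MemLp.coeFn_toLp _

theorem inner_tensor [SFinite μ] [SFinite ν] (f f' : Lp ℝ 2 μ) (g g' : Lp ℝ 2 ν) :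
    ⟪tensor f g, tensor f' g'⟫ = ⟪f, f'⟫ * ⟪g, g'⟫ := by
  simp only [inner_def, RCLike.inner_apply, conj_trivial]
  rw [← integral_prod_mul]
  refine integral_congr_ae ?_
  filter_upwards [coeFn_tensor f g, coeFn_tensor f' g'] with z h h'
  rw [h, h']
  ring

theorem orthonormal_tensor [SFinite μ] [SFinite ν] {φ : ℕ → Lp ℝ 2 μ} {ψ : ℕ → Lp ℝ 2 ν}
    (hφ : Orthonormal ℝ φ) (hψ : Orthonormal ℝ ψ) :
    Orthonormal ℝ fun l => tensor (φ l) (ψ l) := by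
  rw [orthonormal_iff_ite] at hφ hψ ⊢
  intro l m
  rw [inner_tensor, hφ, hψ]
  split_ifs <;> simp

def HasTensorSeries (φ : ℕ → Lp ℝ 2 μ) (ψ : ℕ → Lp ℝ 2 ν) (a : ℕ → ℝ) (f : α × β → ℝ) :
    Prop :=
  Tendsto (fun n => eLpNorm (fun z : α × β => f z - ∑ l ∈ range n, a l * (φ l z.1 * ψ l z.2))
    2 (μ.prod ν)) atTop (𝓝 0)

theorem hasTensorSeries_zero (φ : ℕ → Lp ℝ 2 μ) (ψ : ℕ → Lp ℝ 2 ν) :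
    HasTensorSeries φ ψ 0 0 := by
  simp [HasTensorSeries]

theorem coeFn_sum_smul_tensor (φ : ℕ → Lp ℝ 2 μ) (ψ : ℕ → Lp ℝ 2 ν) (a : ℕ → ℝ) (n : ℕ) :
    ⇑(∑ l ∈ range n, a l • tensor (φ l) (ψ l)) =ᵐ[μ.prod ν]
      fun z => ∑ l ∈ range n, a l * (φ l z.1 * ψ l z.2) := by
  have hsmul := ae_all_iff.2 fun l => Lp.coeFn_smul (a l) (tensor (φ l) (ψ l))
  have htensor := ae_all_iff.2 fun l => coeFn_tensor (φ l) (ψ l)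
  filter_upwards [Lp.coeFn_finsetSum (range n) fun l => a l • tensor (φ l) (ψ l), hsmul,
    htensor] with z hsum hs ht
  simp only [hsum, Finset.sum_apply, hs, Pi.smul_apply, ht, smul_eq_mul]

theorem HasTensorSeries.exists_memLp_tendsto {φ : ℕ → Lp ℝ 2 μ} {ψ : ℕ → Lp ℝ 2 ν}
    {a : ℕ → ℝ} {f : α × β → ℝ} (h : HasTensorSeries φ ψ a f)
    (hfm : AEStronglyMeasurable f (μ.prod ν)) :
    ∃ hf : MemLp f 2 (μ.prod ν),
      Tendsto (fun n => ∑ l ∈ range n, a l • tensor (φ l) (ψ l)) atTop (𝓝 (hf.toLp f)) := by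
  refine Lp.exists_memLp_tendsto_toLp hfm (h.congr fun n => ?_)
  rw [eLpNorm_sub_comm]
  exact eLpNorm_congr_ae (EventuallyEq.rfl.sub (coeFn_sum_smul_tensor φ ψ a n)).symm

theorem HasTensorSeries.ae_eq_iff [SFinite μ] [SFinite ν] {φ : ℕ → Lp ℝ 2 μ}
    {ψ : ℕ → Lp ℝ 2 ν} (hφ : Orthonormal ℝ φ) (hψ : Orthonormal ℝ ψ) {a b : ℕ → ℝ}
    {f g : α × β → ℝ} (hfa : HasTensorSeries φ ψ a f) (hgb : HasTensorSeries φ ψ b g)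
    (hfm : AEStronglyMeasurable f (μ.prod ν)) (hgm : AEStronglyMeasurable g (μ.prod ν)) :
    f =ᵐ[μ.prod ν] g ↔ a = b := by
  obtain ⟨hf, hfa⟩ := hfa.exists_memLp_tendsto hfm
  obtain ⟨hg, hgb⟩ := hgb.exists_memLp_tendsto hgm
  have hΨ := orthonormal_tensor hφ hψ
  rw [← MemLp.toLp_eq_toLp_iff hf hg]
  constructor
  · intro hfg
    funext m
    rw [hΨ.eq_inner_of_tendsto_sum hfa m, hΨ.eq_inner_of_tendsto_sum hgb m, hfg]
  · rintro rfl
    exact tendsto_nhds_unique hfa hgb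

end L2
end MeasureTheory

theorem stmt_0_general
    {D : Type*} [MeasurableSpace D] (μ : Measure D) [SigmaFinite μ]
    (q : ℕ) (G : SimpleGraph (Fin q))
    (φ : ℕ → Lp ℝ 2 μ) (hφ : Orthonormal ℝ φ)
    (Sig Sigs : ℕ → Matrix (Fin q) (Fin q) ℝ)
    (hSigs : ∀ l, (Sigs l).PosDef)
    -- `C`, `Cs`, `K` are the elements of `L²(μ ⊗ μ)` given by the series
    -- `∑ l, σ_{lij} (φ_l ⊗ φ_l)`, `∑ l, σ*_{lij} (φ_l ⊗ φ_l)` and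
    -- `∑ l, (-ω*_{lij}/(ω*_{lii} ω*_{ljj} - ω*_{lij}²)) (φ_l ⊗ φ_l)`, the series
    -- converging in `L²(μ ⊗ μ)`.
    (C Cs K : Fin q → Fin q → D × D → ℝ)
    (hCmeas : ∀ i j, AEStronglyMeasurable (C i j) (μ.prod μ))
    (hCsmeas : ∀ i j, AEStronglyMeasurable (Cs i j) (μ.prod μ))
    (hKmeas : ∀ i j, AEStronglyMeasurable (K i j) (μ.prod μ))
    (hC : ∀ i j, Tendsto (fun n => eLpNorm
      (fun st : D × D => C i j st - ∑ l ∈ range n, Sig l i j * (φ l st.1 * φ l st.2))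
      2 (μ.prod μ)) atTop (𝓝 0))
    (hCs : ∀ i j, Tendsto (fun n => eLpNorm
      (fun st : D × D => Cs i j st - ∑ l ∈ range n, Sigs l i j * (φ l st.1 * φ l st.2))
      2 (μ.prod μ)) atTop (𝓝 0))
    (hK : ∀ i j, Tendsto (fun n => eLpNorm
      (fun st : D × D => K i j st - ∑ l ∈ range n,
        (-(Sigs l)⁻¹ i j / ((Sigs l)⁻¹ i i * (Sigs l)⁻¹ j j - ((Sigs l)⁻¹ i j) ^ 2)) *
          (φ l st.1 * φ l st.2))
      2 (μ.prod μ)) atTop (𝓝 0)) :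
    ((∀ i j, (i = j ∨ G.Adj i j) → Cs i j =ᵐ[μ.prod μ] C i j) ∧
      (∀ i j, i ≠ j → ¬ G.Adj i j → K i j =ᵐ[μ.prod μ] fun _ => (0 : ℝ))) ↔
      ∀ l, IsCovSel G (Sig l) (Sigs l) := by
  have hagree : ∀ i j, Cs i j =ᵐ[μ.prod μ] C i j ↔ ∀ l, Sigs l i j = Sig l i j := fun i j =>
    (L2.HasTensorSeries.ae_eq_iff hφ hφ (hCs i j) (hC i j) (hCsmeas i j) (hCmeas i j)).trans
      funext_iff
  have hvanish : ∀ i j, i ≠ j →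
      (K i j =ᵐ[μ.prod μ] (fun _ => 0) ↔ ∀ l, (Sigs l)⁻¹ i j = 0) := by
    intro i j hij
    refine (L2.HasTensorSeries.ae_eq_iff hφ hφ (hK i j) (L2.hasTensorSeries_zero φ φ)
      (hKmeas i j) aestronglyMeasurable_const).trans (funext_iff.trans (forall_congr' fun l => ?_))
    rw [Pi.zero_apply, div_eq_zero_iff, neg_eq_zero,
      or_iff_left ((hSigs l).inv.mul_diag_sub_sq_pos hij).ne']
  constructor
  · rintro ⟨hedge, hnonedge⟩ l
    exact ⟨hSigs l, fun i j hij => (hagree i j).1 (hedge i j hij) l,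
      fun i j hij hnadj => (hvanish i j hij).1 (hnonedge i j hij hnadj) l⟩
  · intro hsel
    exact ⟨fun i j hij => (hagree i j).2 fun l => (hsel l).2.1 i j hij,
      fun i j hij hnadj => (hvanish i j hij).2 fun l => (hsel l).2.2 i j hij hnadj⟩

theorem stmt_0
    {D : Type*} [MeasurableSpace D] (μ : Measure D) [SigmaFinite μ]
    (q : ℕ) (G : SimpleGraph (Fin q))
    (φ : ℕ → Lp ℝ 2 μ) (hφ : Orthonormal ℝ φ)
    (Sig Sigs : ℕ → Matrix (Fin q) (Fin q) ℝ)
    (hSig : ∀ l, (Sig l).PosDef) (hSigs : ∀ l, (Sigs l).PosDef)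
    (hsum1 : ∀ i j, Summable fun l => (Sig l i j) ^ 2)
    (hsum2 : ∀ i j, Summable fun l => (Sigs l i j) ^ 2)
    (hsum3 : ∀ i j, Summable fun l =>
      ((Sigs l)⁻¹ i j / ((Sigs l)⁻¹ i i * (Sigs l)⁻¹ j j - ((Sigs l)⁻¹ i j) ^ 2)) ^ 2)
    -- `C`, `Cs`, `K` are the elements of `L²(μ ⊗ μ)` given by the series
    -- `∑ l, σ_{lij} (φ_l ⊗ φ_l)`, `∑ l, σ*_{lij} (φ_l ⊗ φ_l)` and
    -- `∑ l, (-ω*_{lij}/(ω*_{lii} ω*_{ljj} - ω*_{lij}²)) (φ_l ⊗ φ_l)`, the series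
    -- converging in `L²(μ ⊗ μ)`.
    (C Cs K : Fin q → Fin q → D × D → ℝ)
    (hCmeas : ∀ i j, AEStronglyMeasurable (C i j) (μ.prod μ))
    (hCsmeas : ∀ i j, AEStronglyMeasurable (Cs i j) (μ.prod μ))
    (hKmeas : ∀ i j, AEStronglyMeasurable (K i j) (μ.prod μ))
    (hC : ∀ i j, Tendsto (fun n => eLpNorm
      (fun st : D × D => C i j st - ∑ l ∈ range n, Sig l i j * (φ l st.1 * φ l st.2))
      2 (μ.prod μ)) atTop (𝓝 0))
    (hCs : ∀ i j, Tendsto (fun n => eLpNorm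
      (fun st : D × D => Cs i j st - ∑ l ∈ range n, Sigs l i j * (φ l st.1 * φ l st.2))
      2 (μ.prod μ)) atTop (𝓝 0))
    (hK : ∀ i j, Tendsto (fun n => eLpNorm
      (fun st : D × D => K i j st - ∑ l ∈ range n,
        (-(Sigs l)⁻¹ i j / ((Sigs l)⁻¹ i i * (Sigs l)⁻¹ j j - ((Sigs l)⁻¹ i j) ^ 2)) *
          (φ l st.1 * φ l st.2))
      2 (μ.prod μ)) atTop (𝓝 0)) :
    ((∀ i j, (i = j ∨ G.Adj i j) → Cs i j =ᵐ[μ.prod μ] C i j) ∧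
      (∀ i j, i ≠ j → ¬ G.Adj i j → K i j =ᵐ[μ.prod μ] fun _ => (0 : ℝ))) ↔
      ∀ l, IsCovSel G (Sig l) (Sigs l) :=
  stmt_0_general μ q G φ hφ Sig Sigs hSigs C Cs K hCmeas hCsmeas hKmeas hC hCs hK
end

section
/- Let G = (V, E) be an undirected graph on V = {1,...,q}, let (D, μ) be a σ-finite measure space, let m ∈ ℕ, and let φ_1, ..., φ_m be an orthonormal family in L²(μ). For l = 1, ..., m let Σ_l and Σ*_l be q×q real symmetric positive definite matrices, write σ_{lij} = (Σ_l)_{ij}, σ*_{lij} = (Σ*_l)_{ij}, ω*_{lij} = ((Σ*_l)⁻¹)_{ij}. Define, as elements of L²(μ ⊗ μ), C^m_{ij} = Σ_{l=1}^m σ_{lij} (φ_l ⊗ φ_l), C*_{ij} = Σ_{l=1}^m σ*_{lij} (φ_l ⊗ φ_l), and K*_{ij} = Σ_{l=1}^m (−ω*_{lij} / (ω*_{lii} ω*_{ljj} − ω*_{lij}²)) (φ_l ⊗ φ_l). Then the following are equivalent: (a) C*_{ij} = C^m_{ij} in L²(μ ⊗ μ) for every pair with i = j or (i,j) ∈ E,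 and K*_{ij} = 0 in L²(μ ⊗ μ) for every pair with i ≠ j and (i,j) ∉ E; (b) for every l = 1, ..., m, Σ*_l is the covariance selection of Σ_l with respect to G. -/
open MeasureTheory Filter Topology Finset

/-
The functions `φ_l ⊗ φ_l` form an orthonormal family in `L²(μ ⊗ μ)`, so integrating against
`φ_k ⊗ φ_k` reads off the `k`-th coefficient of `∑ l, c_l (φ_l ⊗ φ_l)`: two such combinations
agree a.e. exactly when their coefficients agree. Hence (a) says, coefficient by coefficient,
that `Σ*_l` agrees with `Σ_l` on the diagonal and the edges and that the partial correlations
`-ω*_{lij} / (ω*_{lii} ω*_{ljj} - ω*_{lij}²)` vanish off the edges. The denominator is a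
`2 × 2` principal minor of the positive definite matrix `Σ*_l⁻¹`, hence nonzero, so the latter
says `ω*_{lij} = 0`.
-/

theorem Matrix.PosDef.sq_lt_mul_diag {n : Type*} {M : Matrix n n ℝ} (hM : M.PosDef) {i j : n}
    (hij : i ≠ j) : M i j ^ 2 < M i i * M j j := by
  have hinj : Function.Injective ![i, j] :=
    Fin.cons_injective_iff.2 ⟨by simpa using hij, Function.injective_of_subsingleton _⟩
  have hdet := (hM.submatrix hinj).det_pos
  have hsym : M j i = M i j := by simpa using hM.isHermitian.apply i j
  rw [Matrix.det_fin_two] at hdet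
  simp only [Matrix.submatrix_apply, Matrix.cons_val_zero, Matrix.cons_val_one, hsym] at hdet
  linarith

section Orthonormal

variable {D ι : Type*} [MeasurableSpace D] {μ : Measure D} {φ : ι → Lp ℝ 2 μ}

theorem Orthonormal.integral_mul [DecidableEq ι] (hφ : Orthonormal ℝ φ) (l k : ι) :
    ∫ s, φ l s * φ k s ∂μ = if l = k then 1 else 0 := by
  rw [← orthonormal_iff_ite.mp hφ l k, L2.inner_def]
  simp [mul_comm]

variable [Fintype ι] [SFinite μ]

theorem Orthonormal.integral_sum_tensor_mul_tensor (hφ : Orthonormal ℝ φ) (c : ι → ℝ) (k : ι) :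
    ∫ st : D × D, (∑ l, c l * (φ l st.1 * φ l st.2)) * (φ k st.1 * φ k st.2) ∂μ.prod μ = c k := by
  classical
  have hint (l : ι) : Integrable (fun s => φ l s * φ k s) μ := by
    simpa [mul_comm] using L2.integrable_inner (𝕜 := ℝ) (φ l) (φ k)
  calc ∫ st : D × D, (∑ l, c l * (φ l st.1 * φ l st.2)) * (φ k st.1 * φ k st.2) ∂μ.prod μ
      = ∫ st : D × D, ∑ l, c l * ((φ l st.1 * φ k st.1) * (φ l st.2 * φ k st.2)) ∂μ.prod μ := by
        congr 1 with st
        rw [sum_mul]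
        exact sum_congr rfl fun l _ => by ring
    _ = ∑ l, c l * ((∫ s, φ l s * φ k s ∂μ) * ∫ s, φ l s * φ k s ∂μ) := by
        rw [integral_finsetSum _ fun l _ => ((hint l).mul_prod (hint l)).const_mul (c l)]
        simp only [integral_const_mul]
        exact sum_congr rfl fun l _ => congrArg _ <|
          integral_prod_mul (fun s => φ l s * φ k s) fun s => φ l s * φ k s
    _ = c k := by simp [hφ.integral_mul]

theorem Orthonormal.sum_tensor_ae_eq_iff (hφ : Orthonormal ℝ φ) {c c' : ι → ℝ} :
    ((fun st : D × D => ∑ l, c l * (φ l st.1 * φ l st.2)) =ᵐ[μ.prod μ]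
      fun st : D × D => ∑ l, c' l * (φ l st.1 * φ l st.2)) ↔ c = c' := by
  refine ⟨fun h => funext fun k => ?_, fun h => h ▸ EventuallyEq.rfl⟩
  rw [← hφ.integral_sum_tensor_mul_tensor c k, ← hφ.integral_sum_tensor_mul_tensor c' k]
  exact integral_congr_ae (h.mul EventuallyEq.rfl)

theorem Orthonormal.sum_tensor_ae_eq_zero_iff (hφ : Orthonormal ℝ φ) {c : ι → ℝ} :
    ((fun st : D × D => ∑ l, c l * (φ l st.1 * φ l st.2)) =ᵐ[μ.prod μ] fun _ => (0 : ℝ)) ↔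
      c = 0 := by
  simpa using hφ.sum_tensor_ae_eq_iff (c' := 0)

end Orthonormal

theorem stmt_1_general
    {D : Type*} [MeasurableSpace D] (μ : Measure D) [SigmaFinite μ]
    (q m : ℕ) (G : SimpleGraph (Fin q))
    (φ : Fin m → Lp ℝ 2 μ) (hφ : Orthonormal ℝ φ)
    (Sig Sigs : Fin m → Matrix (Fin q) (Fin q) ℝ)
    (hSigs : ∀ l, (Sigs l).PosDef) :
    -- (a): `C*_{ij} = C^m_{ij}` in `L²(μ ⊗ μ)` on the diagonal and the edge set, and
    -- `K*_{ij} = 0` in `L²(μ ⊗ μ)` off the diagonal and the edge set, where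
    -- `C^m_{ij} = ∑ l, σ_{lij} (φ_l ⊗ φ_l)`, `C*_{ij} = ∑ l, σ*_{lij} (φ_l ⊗ φ_l)` and
    -- `K*_{ij} = ∑ l, (-ω*_{lij}/(ω*_{lii} ω*_{ljj} - ω*_{lij}²)) (φ_l ⊗ φ_l)`;
    -- (b): each `Σ*_l` is the covariance selection of `Σ_l` with respect to `G`.
    ((∀ i j, (i = j ∨ G.Adj i j) →
        (fun st : D × D => ∑ l, Sigs l i j * (φ l st.1 * φ l st.2)) =ᵐ[μ.prod μ]
          fun st : D × D => ∑ l, Sig l i j * (φ l st.1 * φ l st.2)) ∧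
      (∀ i j, i ≠ j → ¬ G.Adj i j →
        (fun st : D × D => ∑ l,
          (-(Sigs l)⁻¹ i j / ((Sigs l)⁻¹ i i * (Sigs l)⁻¹ j j - ((Sigs l)⁻¹ i j) ^ 2)) *
            (φ l st.1 * φ l st.2)) =ᵐ[μ.prod μ] fun _ => (0 : ℝ))) ↔
      ∀ l, IsCovSel G (Sig l) (Sigs l) := by
  have hpartial (l : Fin m) {i j : Fin q} (hij : i ≠ j) :
      -(Sigs l)⁻¹ i j / ((Sigs l)⁻¹ i i * (Sigs l)⁻¹ j j - ((Sigs l)⁻¹ i j) ^ 2) = 0 ↔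
        (Sigs l)⁻¹ i j = 0 := by
    simp [sub_ne_zero.2 ((hSigs l).inv.sq_lt_mul_diag hij).ne']
  simp only [hφ.sum_tensor_ae_eq_iff, hφ.sum_tensor_ae_eq_zero_iff, funext_iff, Pi.zero_apply]
  constructor
  · rintro ⟨hdiag, hoff⟩ l
    exact ⟨hSigs l, fun i j hij => hdiag i j hij l,
      fun i j hij hG => (hpartial l hij).1 (hoff i j hij hG l)⟩
  · intro hsel
    exact ⟨fun i j hij l => (hsel l).2.1 i j hij,
      fun i j hij hG l => (hpartial l hij).2 ((hsel l).2.2 i j hij hG)⟩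

theorem stmt_1
    {D : Type*} [MeasurableSpace D] (μ : Measure D) [SigmaFinite μ]
    (q m : ℕ) (G : SimpleGraph (Fin q))
    (φ : Fin m → Lp ℝ 2 μ) (hφ : Orthonormal ℝ φ)
    (Sig Sigs : Fin m → Matrix (Fin q) (Fin q) ℝ)
    (hSig : ∀ l, (Sig l).PosDef) (hSigs : ∀ l, (Sigs l).PosDef) :
    -- (a): `C*_{ij} = C^m_{ij}` in `L²(μ ⊗ μ)` on the diagonal and the edge set, and
    -- `K*_{ij} = 0` in `L²(μ ⊗ μ)` off the diagonal and the edge set, where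
    -- `C^m_{ij} = ∑ l, σ_{lij} (φ_l ⊗ φ_l)`, `C*_{ij} = ∑ l, σ*_{lij} (φ_l ⊗ φ_l)` and
    -- `K*_{ij} = ∑ l, (-ω*_{lij}/(ω*_{lii} ω*_{ljj} - ω*_{lij}²)) (φ_l ⊗ φ_l)`;
    -- (b): each `Σ*_l` is the covariance selection of `Σ_l` with respect to `G`.
    ((∀ i j, (i = j ∨ G.Adj i j) →
        (fun st : D × D => ∑ l, Sigs l i j * (φ l st.1 * φ l st.2)) =ᵐ[μ.prod μ]
          fun st : D × D => ∑ l, Sig l i j * (φ l st.1 * φ l st.2)) ∧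
      (∀ i j, i ≠ j → ¬ G.Adj i j →
        (fun st : D × D => ∑ l,
          (-(Sigs l)⁻¹ i j / ((Sigs l)⁻¹ i i * (Sigs l)⁻¹ j j - ((Sigs l)⁻¹ i j) ^ 2)) *
            (φ l st.1 * φ l st.2)) =ᵐ[μ.prod μ] fun _ => (0 : ℝ))) ↔
      ∀ l, IsCovSel G (Sig l) (Sigs l) :=
  stmt_1_general μ q m G φ hφ Sig Sigs hSigs
end

section
/- Let G = (V, E) be an undirected graph on V = {1,...,q}, let m ∈ ℕ, and for l = 1, ..., m let S_l be a q×q real symmetric positive definite matrix. Suppose for each l there exists a q×q matrix B_l that is the covariance selection of S_l with respect to G. Then for every tuple (Σ_1, ..., Σ_m) of q×q real symmetric positive definite matrices satisfying the graphical constraint ((Σ_l)⁻¹)_{ij} = 0 for all l and all pairs with i ≠ j and (i,j) ∉ E, one has Σ_{l=1}^m [ tr((Σ_l)⁻¹ S_l) + log det Σ_l ] ≥ Σ_{l=1}^m [ tr((B_l)⁻¹ S_l) + log det B_l ] = Σ_{l=1}^m [ q + log det B_l ], with equality if and only if Σ_l = B_l for every l = 1, ..., m. -/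
/-!
Because `Σ⁻¹` vanishes off the graph while the covariance selection `B` agrees with `S` on it,
`tr (Σ⁻¹ S) = tr (Σ⁻¹ B)`; in particular `tr (B⁻¹ S) = q`. Each summand thus becomes the Gaussian
objective `tr (Σ⁻¹ B) + log det Σ`, whose excess over `q + log det B` is `tr M - q - log det M`
for the positive definite matrix `M = Σ^{-1/2} B Σ^{-1/2}`. Summing `1 + log λ ≤ λ` over the
eigenvalues of `M` shows that this excess is nonnegative and vanishes only for `M = 1`,
i.e. for `Σ = B`.
-/

open Finset

namespace Matrix

variable {n : Type*} [Fintype n]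

theorem trace_mul_eq_trace_mul_of_ne_zero {R : Type*} [NonUnitalNonAssocSemiring R]
    {P X Y : Matrix n n R} (h : ∀ i j, P i j ≠ 0 → X j i = Y j i) :
    (P * X).trace = (P * Y).trace := by
  simp only [trace, diag_apply, mul_apply]
  refine Finset.sum_congr rfl fun i _ => Finset.sum_congr rfl fun j _ => ?_
  by_cases hP : P i j = 0
  · simp [hP]
  · rw [h i j hP]

variable [DecidableEq n]

theorem IsHermitian.eq_one_of_eigenvalues_eq_one {𝕜 : Type*} [RCLike 𝕜] {M : Matrix n n 𝕜}
    (hM : M.IsHermitian) (h : ∀ i, hM.eigenvalues i = 1) : M = 1 := by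
  refine CFC.eq_one_of_spectrum_subset_one (R := ℝ) M ?_ hM.isSelfAdjoint
  rw [hM.spectrum_real_eq_range_eigenvalues]
  rintro _ ⟨i, rfl⟩
  exact h i

namespace PosDef

variable {M A B : Matrix n n ℝ}

theorem card_add_log_det_eq_sum_eigenvalues (hM : M.PosDef) :
    (Fintype.card n : ℝ) + Real.log M.det = ∑ i, (1 + Real.log (hM.1.eigenvalues i)) := by
  rw [hM.1.det_eq_prod_eigenvalues]
  simp only [RCLike.ofReal_real_eq_id, id_eq]
  rw [Real.log_prod fun i _ => (hM.eigenvalues_pos i).ne', Finset.sum_add_distrib]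
  simp

theorem card_add_log_det_le_trace (hM : M.PosDef) :
    (Fintype.card n : ℝ) + Real.log M.det ≤ M.trace := by
  rw [hM.card_add_log_det_eq_sum_eigenvalues, hM.1.trace_eq_sum_eigenvalues]
  simp only [RCLike.ofReal_real_eq_id, id_eq]
  exact Finset.sum_le_sum fun i _ => by
    linarith [Real.log_le_sub_one_of_pos (hM.eigenvalues_pos i)]

theorem card_add_log_det_eq_trace_iff (hM : M.PosDef) :
    (Fintype.card n : ℝ) + Real.log M.det = M.trace ↔ M = 1 := by
  refine ⟨fun h => hM.1.eq_one_of_eigenvalues_eq_one fun i => ?_, fun h => by simp [h]⟩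
  rw [hM.card_add_log_det_eq_sum_eigenvalues, hM.1.trace_eq_sum_eigenvalues] at h
  simp only [RCLike.ofReal_real_eq_id, id_eq] at h
  have hle i : 1 + Real.log (hM.1.eigenvalues i) ≤ hM.1.eigenvalues i := by
    linarith [Real.log_le_sub_one_of_pos (hM.eigenvalues_pos i)]
  have hi := (Finset.sum_eq_sum_iff_of_le fun i _ => hle i).mp h i (Finset.mem_univ i)
  by_contra hne
  linarith [Real.log_lt_sub_one_of_pos (hM.eigenvalues_pos i) hne]

open scoped MatrixOrder in
theorem exists_posDef_similar_inv_mul (hA : A.PosDef) (hB : B.PosDef) :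
    ∃ M : Matrix n n ℝ, M.PosDef ∧ M.trace = (A⁻¹ * B).trace ∧
      Real.log M.det = Real.log B.det - Real.log A.det ∧ (M = 1 ↔ A = B) := by
  set R := CFC.sqrt A⁻¹
  have hRR : R * R = A⁻¹ := CFC.sqrt_mul_sqrt_self _ hA.inv.posSemidef.nonneg
  have hRH : Rᴴ = R := (nonneg_iff_posSemidef.mp (CFC.sqrt_nonneg A⁻¹)).1
  have hRu : IsUnit R := isUnit_of_mul_isUnit_left (hRR ▸ hA.inv.isUnit)
  have hdetR : R.det * R.det = (A.det)⁻¹ := by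
    rw [← det_mul, hRR, det_nonsing_inv, Ring.inverse_eq_inv']
  refine ⟨R * B * R, ?_, ?_, ?_, ?_⟩
  · simpa only [hRH] using hB.conjTranspose_mul_mul_same (mulVec_injective_iff_isUnit.mpr hRu)
  · rw [trace_mul_cycle, hRR]
  · rw [det_mul, det_mul, mul_right_comm, hdetR,
      Real.log_mul (inv_ne_zero hA.det_pos.ne') hB.det_pos.ne', Real.log_inv]
    ring
  · have hconj : R * B * R = R⁻¹ * (A⁻¹ * B) * R := by
      rw [← hRR, mul_assoc R R B, ← mul_assoc R⁻¹ R,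
        nonsing_inv_mul _ ((isUnit_iff_isUnit_det _).mp hRu), one_mul]
    have := hRu.invertible
    have := hA.isUnit.invertible
    rw [hconj, mul_assoc, inv_mul_eq_iff_eq_mul_of_invertible, mul_one, hRu.mul_eq_right,
      inv_mul_eq_iff_eq_mul_of_invertible, mul_one, eq_comm]

end PosDef

/-- Up to constants, `-2/N` times the log-likelihood of a centred Gaussian model with covariance
`Sig`, given the sample covariance `S`. -/
noncomputable def gaussianNegLogLik (Sig S : Matrix n n ℝ) : ℝ :=
  (Sig⁻¹ * S).trace + Real.log Sig.det

variable {A B : Matrix n n ℝ}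

theorem gaussianNegLogLik_self (hB : IsUnit B) :
    gaussianNegLogLik B B = Fintype.card n + Real.log B.det := by
  rw [gaussianNegLogLik, nonsing_inv_mul _ ((isUnit_iff_isUnit_det _).mp hB), trace_one]

theorem gaussianNegLogLik_congr_right {G : SimpleGraph n} {Sig S T : Matrix n n ℝ}
    (hSig : ∀ i j, i ≠ j → ¬ G.Adj i j → Sig⁻¹ i j = 0)
    (hST : ∀ i j, (i = j ∨ G.Adj i j) → S i j = T i j) :
    gaussianNegLogLik Sig S = gaussianNegLogLik Sig T := by
  rw [gaussianNegLogLik, gaussianNegLogLik,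
    trace_mul_eq_trace_mul_of_ne_zero fun i j hij => hST j i ?_]
  by_contra hout
  exact hij (hSig i j (fun h => hout (.inl h.symm)) fun h => hout (.inr h.symm))

namespace PosDef

theorem gaussianNegLogLik_self_le (hA : A.PosDef) (hB : B.PosDef) :
    gaussianNegLogLik B B ≤ gaussianNegLogLik A B := by
  obtain ⟨M, hM, htr, hlog, -⟩ := hA.exists_posDef_similar_inv_mul hB
  rw [gaussianNegLogLik_self hB.isUnit, gaussianNegLogLik, ← htr]
  linarith [hM.card_add_log_det_le_trace]

theorem gaussianNegLogLik_eq_self_iff (hA : A.PosDef) (hB : B.PosDef) :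
    gaussianNegLogLik A B = gaussianNegLogLik B B ↔ A = B := by
  obtain ⟨M, hM, htr, hlog, hM1⟩ := hA.exists_posDef_similar_inv_mul hB
  rw [gaussianNegLogLik_self hB.isUnit, gaussianNegLogLik, ← htr, ← hM1,
    ← hM.card_add_log_det_eq_trace_iff]
  constructor <;> intro h <;> linarith

end PosDef

end Matrix

open Matrix

namespace IsCovSel

variable {q : ℕ} {G : SimpleGraph (Fin q)} {A B Sig : Matrix (Fin q) (Fin q) ℝ}

theorem gaussianNegLogLik_congr_right (hB : IsCovSel G A B)
    (hSig : ∀ i j, i ≠ j → ¬ G.Adj i j → Sig⁻¹ i j = 0) :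
    gaussianNegLogLik Sig A = gaussianNegLogLik Sig B :=
  Matrix.gaussianNegLogLik_congr_right hSig fun i j hij => (hB.2.1 i j hij).symm

theorem gaussianNegLogLik_self (hB : IsCovSel G A B) :
    gaussianNegLogLik B A = q + Real.log B.det := by
  rw [hB.gaussianNegLogLik_congr_right hB.2.2, Matrix.gaussianNegLogLik_self hB.1.isUnit,
    Fintype.card_fin]

theorem gaussianNegLogLik_le (hB : IsCovSel G A B) (hSig : Sig.PosDef)
    (hSigG : ∀ i j, i ≠ j → ¬ G.Adj i j → Sig⁻¹ i j = 0) :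
    gaussianNegLogLik B A ≤ gaussianNegLogLik Sig A := by
  rw [hB.gaussianNegLogLik_congr_right hSigG, hB.gaussianNegLogLik_congr_right hB.2.2]
  exact hSig.gaussianNegLogLik_self_le hB.1

theorem gaussianNegLogLik_eq_iff (hB : IsCovSel G A B) (hSig : Sig.PosDef)
    (hSigG : ∀ i j, i ≠ j → ¬ G.Adj i j → Sig⁻¹ i j = 0) :
    gaussianNegLogLik Sig A = gaussianNegLogLik B A ↔ Sig = B := by
  rw [hB.gaussianNegLogLik_congr_right hSigG, hB.gaussianNegLogLik_congr_right hB.2.2]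
  exact hSig.gaussianNegLogLik_eq_self_iff hB.1

end IsCovSel

theorem stmt_2_general (q m : ℕ) (G : SimpleGraph (Fin q))
    (S B : Fin m → Matrix (Fin q) (Fin q) ℝ)
    (hB : ∀ l, IsCovSel G (S l) (B l)) :
    ∀ Sig : Fin m → Matrix (Fin q) (Fin q) ℝ,
      (∀ l, (Sig l).PosDef) →
      (∀ l i j, i ≠ j → ¬ G.Adj i j → (Sig l)⁻¹ i j = 0) →
      (∑ l, (((Sig l)⁻¹ * S l).trace + Real.log (Sig l).det) ≥
          ∑ l, (((B l)⁻¹ * S l).trace + Real.log (B l).det)) ∧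
        (∑ l, (((B l)⁻¹ * S l).trace + Real.log (B l).det) =
          ∑ l : Fin m, ((q : ℝ) + Real.log (B l).det)) ∧
        (∑ l, (((Sig l)⁻¹ * S l).trace + Real.log (Sig l).det) =
            ∑ l, (((B l)⁻¹ * S l).trace + Real.log (B l).det) ↔
          ∀ l, Sig l = B l) := by
  intro Sig hSig hSigG
  have hle l : gaussianNegLogLik (B l) (S l) ≤ gaussianNegLogLik (Sig l) (S l) :=
    (hB l).gaussianNegLogLik_le (hSig l) (hSigG l)
  refine ⟨Finset.sum_le_sum fun l _ => hle l,
    Finset.sum_congr rfl fun l _ => (hB l).gaussianNegLogLik_self, ?_⟩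
  calc (∑ l, gaussianNegLogLik (Sig l) (S l) = ∑ l, gaussianNegLogLik (B l) (S l))
      ↔ ∀ l ∈ Finset.univ, gaussianNegLogLik (B l) (S l) = gaussianNegLogLik (Sig l) (S l) :=
        eq_comm.trans (Finset.sum_eq_sum_iff_of_le fun l _ => hle l)
    _ ↔ ∀ l, Sig l = B l := by
        simp only [Finset.mem_univ, true_implies, eq_comm (a := gaussianNegLogLik (B _) _),
          fun l => (hB l).gaussianNegLogLik_eq_iff (hSig l) (hSigG l)]

theorem stmt_2 (q m : ℕ) (G : SimpleGraph (Fin q))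
    (S B : Fin m → Matrix (Fin q) (Fin q) ℝ)
    (hS : ∀ l, (S l).PosDef)
    (hB : ∀ l, IsCovSel G (S l) (B l)) :
    ∀ Sig : Fin m → Matrix (Fin q) (Fin q) ℝ,
      (∀ l, (Sig l).PosDef) →
      (∀ l i j, i ≠ j → ¬ G.Adj i j → (Sig l)⁻¹ i j = 0) →
      (∑ l, (((Sig l)⁻¹ * S l).trace + Real.log (Sig l).det) ≥
          ∑ l, (((B l)⁻¹ * S l).trace + Real.log (B l).det)) ∧
        (∑ l, (((B l)⁻¹ * S l).trace + Real.log (B l).det) =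
          ∑ l : Fin m, ((q : ℝ) + Real.log (B l).det)) ∧
        (∑ l, (((Sig l)⁻¹ * S l).trace + Real.log (Sig l).det) =
            ∑ l, (((B l)⁻¹ * S l).trace + Real.log (B l).det) ↔
          ∀ l, Sig l = B l) :=
  stmt_2_general q m G S B hB
end

section
/- Let G = (V, E) be an undirected graph on V = {1,...,q}, let S be a q×q real symmetric positive definite matrix, and let B be a covariance selection of S with respect to G, i.e., B is positive definite, B_{ij} = S_{ij} whenever i = j or (i,j) ∈ E, and (B⁻¹)_{ij} = 0 whenever i ≠ j and (i,j) ∉ E. Then for every q×q real symmetric positive definite matrix Σ satisfying (Σ⁻¹)_{ij} = 0 for all i ≠ j with (i,j) ∉ E, one has tr(Σ⁻¹ S) + log det Σ ≥ tr(B⁻¹ S) + log det B = q + log det B, with equality if and only if Σ = B. -/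
/-!
Since `Σ⁻¹` and `B⁻¹` vanish off the diagonal and the edges of `G`, where `S` and `B` agree,
`tr(Σ⁻¹ S) = tr(Σ⁻¹ B)` and `tr(B⁻¹ S) = tr(B⁻¹ B) = q`. So the claim is Gaussian likelihood
maximisation: `q + log det B ≤ tr(Σ⁻¹ B) + log det Σ`, with equality iff `Σ = B`. For
`M = √B Σ⁻¹ √B` (positive definite) the gap is `tr M - log det M - q = ∑ᵢ (λᵢ - 1 - log λᵢ)`
over the eigenvalues of `M`, which is nonnegative and vanishes iff every `λᵢ = 1`, i.e. `M = 1`.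
-/

open Matrix

namespace Real

lemma log_eq_sub_one_iff {x : ℝ} (hx : 0 < x) : log x = x - 1 ↔ x = 1 :=
  ⟨fun h => by_contra fun hx1 => (log_lt_sub_one_of_pos hx hx1).ne h, fun h => by simp [h]⟩

end Real

namespace Matrix

lemma trace_mul_eq_of_eq_on_adj {n R : Type*} [Fintype n] [Semiring R] (G : SimpleGraph n)
    {X S B : Matrix n n R} (hX : ∀ i j, i ≠ j → ¬ G.Adj i j → X i j = 0)
    (hSB : ∀ i j, (i = j ∨ G.Adj i j) → B i j = S i j) :
    (X * S).trace = (X * B).trace := by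
  refine Finset.sum_congr rfl fun i _ => Finset.sum_congr rfl fun j _ => ?_
  change X i j * S j i = X i j * B j i
  by_cases hij : i = j
  · rw [hSB j i (Or.inl hij.symm)]
  by_cases hadj : G.Adj i j
  · rw [hSB j i (Or.inr hadj.symm)]
  · rw [hX i j hij hadj, zero_mul, zero_mul]

variable {n : Type*} [Fintype n] [DecidableEq n]

namespace PosDef

lemma trace_sub_log_det_sub_card {M : Matrix n n ℝ} (hM : M.PosDef) :
    M.trace - Real.log M.det - Fintype.card n =
      ∑ i, (hM.1.eigenvalues i - 1 - Real.log (hM.1.eigenvalues i)) := by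
  have hlog : Real.log M.det = ∑ i, Real.log (hM.1.eigenvalues i) := by
    rw [hM.1.det_eq_prod_eigenvalues]
    exact Real.log_prod fun i _ => (hM.eigenvalues_pos i).ne'
  rw [hM.1.trace_eq_sum_eigenvalues, hlog, Finset.sum_sub_distrib, Finset.sum_sub_distrib]
  simp only [RCLike.ofReal_real_eq_id, id, Finset.sum_const, Finset.card_univ, nsmul_eq_mul,
    mul_one]
  ring

lemma card_le_trace_sub_log_det {M : Matrix n n ℝ} (hM : M.PosDef) :
    (Fintype.card n : ℝ) ≤ M.trace - Real.log M.det := by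
  have hgap := hM.trace_sub_log_det_sub_card
  have hsum_nonneg : 0 ≤ ∑ i, (hM.1.eigenvalues i - 1 - Real.log (hM.1.eigenvalues i)) :=
    Finset.sum_nonneg fun i _ => by linarith [Real.log_le_sub_one_of_pos (hM.eigenvalues_pos i)]
  linarith

lemma trace_sub_log_det_eq_card_iff {M : Matrix n n ℝ} (hM : M.PosDef) :
    M.trace - Real.log M.det = Fintype.card n ↔ M = 1 := by
  refine ⟨fun h => ?_, fun h => by simp [h]⟩
  have hsum := hM.trace_sub_log_det_sub_card
  rw [h, sub_self, eq_comm, Finset.sum_eq_zero_iff_of_nonneg fun i _ => by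
    linarith [Real.log_le_sub_one_of_pos (hM.eigenvalues_pos i)]] at hsum
  have heig : ∀ i, hM.1.eigenvalues i = 1 := fun i =>
    (Real.log_eq_sub_one_iff (hM.eigenvalues_pos i)).mp
      (by linarith [hsum i (Finset.mem_univ i)])
  refine CFC.eq_one_of_spectrum_subset_one (R := ℝ) M ?_ hM.1.isSelfAdjoint
  rw [hM.1.spectrum_real_eq_range_eigenvalues]
  rintro _ ⟨i, rfl⟩
  exact heig i

lemma inv_mul_eq_one_iff {A B : Matrix n n ℝ} (hA : A.PosDef) : A⁻¹ * B = 1 ↔ A = B := by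
  have hA_det : IsUnit A.det := hA.det_pos.ne'.isUnit
  refine ⟨fun h => inv_inj (inv_eq_left_inv h).symm hA_det, ?_⟩
  rintro rfl
  exact nonsing_inv_mul A hA_det

open scoped MatrixOrder in
/-- With `R = √B`, the congruent matrix `R Σ⁻¹ R` is similar to `Σ⁻¹ B` but positive definite. -/
lemma exists_trace_sub_log_det_eq {Sig B : Matrix n n ℝ} (hSig : Sig.PosDef) (hB : B.PosDef) :
    ∃ M : Matrix n n ℝ, M.PosDef ∧
      M.trace - Real.log M.det = (Sig⁻¹ * B).trace + Real.log Sig.det - Real.log B.det ∧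
      (M = 1 ↔ Sig = B) := by
  set R := CFC.sqrt B
  have hRR : R * R = B := CFC.sqrt_mul_sqrt_self B hB.posSemidef.nonneg
  have hR : Rᴴ = R := (CFC.sqrt_nonneg B).posSemidef.1
  have hdet : (R * Sig⁻¹ * R).det = B.det * Sig.det⁻¹ := by
    rw [det_mul, det_mul, det_nonsing_inv, Ring.inverse_eq_inv', ← hRR, det_mul]
    ring
  have hM : (R * Sig⁻¹ * R).PosDef := by
    have hM' := hSig.inv.posSemidef.mul_mul_conjTranspose_same R
    rw [hR] at hM'
    rw [hM'.posDef_iff_det_ne_zero, hdet]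
    exact mul_ne_zero hB.det_pos.ne' (inv_ne_zero hSig.det_pos.ne')
  refine ⟨_, hM, ?_, ?_⟩
  · rw [trace_mul_cycle, hRR, trace_mul_comm, hdet,
      Real.log_mul hB.det_pos.ne' (inv_ne_zero hSig.det_pos.ne'), Real.log_inv]
    ring
  · calc R * Sig⁻¹ * R = 1 ↔ Sig⁻¹ * R * R = 1 := by rw [mul_assoc, mul_eq_one_comm]
      _ ↔ Sig⁻¹ * B = 1 := by rw [mul_assoc, hRR]
      _ ↔ Sig = B := inv_mul_eq_one_iff hSig

lemma card_add_log_det_le_trace_inv_mul_add_log_det {Sig B : Matrix n n ℝ} (hSig : Sig.PosDef)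
    (hB : B.PosDef) :
    Fintype.card n + Real.log B.det ≤ (Sig⁻¹ * B).trace + Real.log Sig.det := by
  obtain ⟨M, hM, hM_tr, -⟩ := exists_trace_sub_log_det_eq hSig hB
  linarith [hM.card_le_trace_sub_log_det]

lemma trace_inv_mul_add_log_det_eq_iff {Sig B : Matrix n n ℝ} (hSig : Sig.PosDef)
    (hB : B.PosDef) :
    (Sig⁻¹ * B).trace + Real.log Sig.det = Fintype.card n + Real.log B.det ↔ Sig = B := by
  obtain ⟨M, hM, hM_tr, hM_one⟩ := exists_trace_sub_log_det_eq hSig hB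
  rw [← hM_one, ← hM.trace_sub_log_det_eq_card_iff, hM_tr]
  constructor <;> intro h <;> linarith

end PosDef

end Matrix

theorem stmt_6_general (q : ℕ) (G : SimpleGraph (Fin q)) (S B : Matrix (Fin q) (Fin q) ℝ)
    (hB : IsCovSel G S B) :
    ∀ Sig : Matrix (Fin q) (Fin q) ℝ, Sig.PosDef →
      (∀ i j, i ≠ j → ¬ G.Adj i j → Sig⁻¹ i j = 0) →
      ((Sig⁻¹ * S).trace + Real.log Sig.det ≥ (B⁻¹ * S).trace + Real.log B.det ∧
        (B⁻¹ * S).trace + Real.log B.det = (q : ℝ) + Real.log B.det ∧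
        ((Sig⁻¹ * S).trace + Real.log Sig.det = (B⁻¹ * S).trace + Real.log B.det ↔
          Sig = B)) := by
  intro Sig hSig hSig_supp
  obtain ⟨hB_pd, hB_eq, hB_supp⟩ := hB
  have hSig_tr : (Sig⁻¹ * S).trace = (Sig⁻¹ * B).trace :=
    trace_mul_eq_of_eq_on_adj G hSig_supp hB_eq
  have hB_tr : (B⁻¹ * S).trace = q := by
    rw [trace_mul_eq_of_eq_on_adj G hB_supp hB_eq, nonsing_inv_mul B hB_pd.det_pos.ne'.isUnit,
      trace_one, Fintype.card_fin]
  have hle := hSig.card_add_log_det_le_trace_inv_mul_add_log_det hB_pd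
  have hiff := hSig.trace_inv_mul_add_log_det_eq_iff hB_pd
  rw [Fintype.card_fin] at hle hiff
  rw [hSig_tr, hB_tr]
  exact ⟨hle, rfl, hiff⟩

theorem stmt_6 (q : ℕ) (G : SimpleGraph (Fin q)) (S B : Matrix (Fin q) (Fin q) ℝ)
    (hS : S.PosDef) (hB : IsCovSel G S B) :
    ∀ Sig : Matrix (Fin q) (Fin q) ℝ, Sig.PosDef →
      (∀ i j, i ≠ j → ¬ G.Adj i j → Sig⁻¹ i j = 0) →
      ((Sig⁻¹ * S).trace + Real.log Sig.det ≥ (B⁻¹ * S).trace + Real.log B.det ∧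
        (B⁻¹ * S).trace + Real.log B.det = (q : ℝ) + Real.log B.det ∧
        ((Sig⁻¹ * S).trace + Real.log Sig.det = (B⁻¹ * S).trace + Real.log B.det ↔
          Sig = B)) :=
  stmt_6_general q G S B hB
end

section
/- Let G = (V, E) be an undirected graph on V = {1,...,q} and let S be a q×q real symmetric positive definite matrix. If B₁ and B₂ are both covariance selections of S with respect to G (i.e., each B ∈ {B₁, B₂} is positive definite, satisfies B_{ij} = S_{ij} whenever i = j or (i,j) ∈ E, and (B⁻¹)_{ij} = 0 whenever i ≠ j and (i,j) ∉ E), then B₁ = B₂. -/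
open Matrix
open scoped MatrixOrder ComplexOrder

namespace Matrix

variable {n R : Type*} [Fintype n]

theorem trace_mul_eq_zero_of_forall_eq_zero_or [NonUnitalNonAssocSemiring R] {M N : Matrix n n R}
    (h : ∀ i j, M i j = 0 ∨ N j i = 0) : (M * N).trace = 0 :=
  Finset.sum_eq_zero fun i _ => Finset.sum_eq_zero fun j _ => by
    rcases h i j with h | h <;> simp [h]

variable {𝕜 : Type*} [RCLike 𝕜] [DecidableEq n]

theorem PosDef.exists_isUnit_eq_conjTranspose_mul_self {A : Matrix n n 𝕜} (hA : A.PosDef) :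
    ∃ R : Matrix n n 𝕜, IsUnit R ∧ A = Rᴴ * R := by
  set R := CFC.sqrt A
  have hR : Rᴴ = R := (CFC.sqrt_nonneg A).posSemidef.isHermitian
  have hRR : R * R = A := CFC.sqrt_mul_sqrt_self A hA.posSemidef.nonneg
  have hdet : IsUnit (R.det * R.det) := by
    rw [← det_mul, hRR, ← isUnit_iff_isUnit_det]
    exact hA.isUnit
  exact ⟨R, (isUnit_iff_isUnit_det R).mpr (isUnit_of_mul_isUnit_left hdet), by rw [hR, hRR]⟩

theorem PosDef.eq_zero_of_trace_mul_mul_mul_eq_zero {A B D : Matrix n n 𝕜} (hA : A.PosDef)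
    (hB : B.PosDef) (hD : D.IsHermitian) (h : (A * D * B * D).trace = 0) : D = 0 := by
  obtain ⟨M, hM, rfl⟩ := hA.exists_isUnit_eq_conjTranspose_mul_self
  obtain ⟨L, hL, rfl⟩ := hB.exists_isUnit_eq_conjTranspose_mul_self
  have hfrob : (M * D * Lᴴ * (M * D * Lᴴ)ᴴ).trace = 0 := by
    rw [← h, conjTranspose_mul, conjTranspose_mul, conjTranspose_conjTranspose, hD.eq]
    have := trace_mul_comm Mᴴ (M * D * (Lᴴ * L) * D)
    simp only [← mul_assoc] at this ⊢
    exact this.symm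
  have hMDL : M * D * Lᴴ = 0 := trace_mul_conjTranspose_self_eq_zero_iff.mp hfrob
  have hL' : IsUnit Lᴴ := hL.star
  rwa [hL'.mul_left_eq_zero, hM.mul_right_eq_zero] at hMDL

end Matrix

namespace IsCovSel

variable {q : ℕ} {G : SimpleGraph (Fin q)} {S B₁ B₂ : Matrix (Fin q) (Fin q) ℝ}

theorem trace_inv_sub_inv_mul_sub_eq_zero (hB₁ : IsCovSel G S B₁) (hB₂ : IsCovSel G S B₂) :
    ((B₂⁻¹ - B₁⁻¹) * (B₁ - B₂)).trace = 0 := by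
  obtain ⟨-, hB₁S, hB₁inv⟩ := hB₁
  obtain ⟨-, hB₂S, hB₂inv⟩ := hB₂
  refine trace_mul_eq_zero_of_forall_eq_zero_or fun i j => ?_
  by_cases hij : i = j ∨ G.Adj i j
  · right
    have hji : j = i ∨ G.Adj j i := hij.imp Eq.symm G.adj_symm
    rw [Matrix.sub_apply, hB₁S j i hji, hB₂S j i hji, sub_self]
  · left
    push Not at hij
    rw [Matrix.sub_apply, hB₁inv i j hij.1 hij.2, hB₂inv i j hij.1 hij.2, sub_self]

end IsCovSel

theorem stmt_7_general (q : ℕ) (G : SimpleGraph (Fin q)) (S B₁ B₂ : Matrix (Fin q) (Fin q) ℝ)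
    (hB₁ : IsCovSel G S B₁) (hB₂ : IsCovSel G S B₂) :
    B₁ = B₂ := by
  have htrace := hB₁.trace_inv_sub_inv_mul_sub_eq_zero hB₂
  obtain ⟨hB₁pd, -, -⟩ := hB₁
  obtain ⟨hB₂pd, -, -⟩ := hB₂
  rw [Matrix.inv_sub_inv (by simp only [hB₁pd.isUnit, hB₂pd.isUnit])] at htrace
  exact sub_eq_zero.mp <| hB₂pd.inv.eq_zero_of_trace_mul_mul_mul_eq_zero hB₁pd.inv
    (hB₁pd.isHermitian.sub hB₂pd.isHermitian) htrace

theorem stmt_7 (q : ℕ) (G : SimpleGraph (Fin q)) (S B₁ B₂ : Matrix (Fin q) (Fin q) ℝ)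
    (hS : S.PosDef) (hB₁ : IsCovSel G S B₁) (hB₂ : IsCovSel G S B₂) :
    B₁ = B₂ :=
  stmt_7_general q G S B₁ B₂ hB₁ hB₂
end

section
/- Let p, q ∈ ℕ, let φ_1, ..., φ_p be an orthonormal basis of ℝ^p (viewed as p×1 matrices), let A_1, ..., A_p be q×q real symmetric positive definite matrices, let C = Σ_{l=1}^p A_l ⊗ φ_l φ_lᵀ, and let S be any (pq)×(pq) real matrix. Then tr(C⁻¹ S) = Σ_{l=1}^p tr((A_l)⁻¹ S_l), where S_l = (I_q ⊗ φ_lᵀ) S (I_q ⊗ φ_l) and ⊗ denotes the Kronecker product. -/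
open Matrix Kronecker

private lemma collapse1 {α β : Type*} [Fintype α] [Fintype β] [DecidableEq α]
    (x : α) (f : α → β → ℝ) :
    (∑ a : α, ∑ b : β, if a = x then f a b else 0) = ∑ b : β, f x b := by
  rw [Finset.sum_comm]; simp

private lemma collapse2 {α β : Type*} [Fintype α] [Fintype β] [DecidableEq α]
    (x : α) (f : α → β → ℝ) :
    (∑ a : α, ∑ b : β, if x = a then f a b else 0) = ∑ b : β, f x b := by
  rw [Finset.sum_comm]; simp

theorem stmt_13 (p q : ℕ)
    (φ : Fin p → Matrix (Fin p) (Fin 1) ℝ)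
    (hφ : ∀ k l, (φ k)ᵀ * φ l = if k = l then 1 else 0)
    (A : Fin p → Matrix (Fin q) (Fin q) ℝ) (hA : ∀ l, (A l).PosDef)
    (S : Matrix (Fin q × Fin p) (Fin q × Fin p) ℝ) :
    ((∑ l, A l ⊗ₖ (φ l * (φ l)ᵀ))⁻¹ * S).trace =
      ∑ l, ((A l)⁻¹ *
        Matrix.reindex (Equiv.prodUnique (Fin q) (Fin 1)) (Equiv.prodUnique (Fin q) (Fin 1))
          (((1 : Matrix (Fin q) (Fin q) ℝ) ⊗ₖ (φ l)ᵀ) * S *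
            ((1 : Matrix (Fin q) (Fin q) ℝ) ⊗ₖ φ l))).trace := by
  have hcomp : ∑ l, φ l * (φ l)ᵀ = (1 : Matrix (Fin p) (Fin p) ℝ) := by
    set Φ : Matrix (Fin p) (Fin p) ℝ := Matrix.of fun i l => φ l i 0 with hΦ
    have h1 : Φᵀ * Φ = 1 := by
      ext k l
      have := congrFun (congrFun (hφ k l) 0) 0
      rw [apply_ite (fun M : Matrix (Fin 1) (Fin 1) ℝ => M 0 0)] at this
      simp [Matrix.mul_apply] at this
      simp [Matrix.mul_apply, hΦ, Matrix.one_apply, mul_comm]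
      split_ifs at this ⊢ <;> simp_all [mul_comm]
    have h2 : Φ * Φᵀ = 1 := mul_eq_one_comm.mp h1
    ext i j
    have := congrFun (congrFun h2 i) j
    simp [Matrix.mul_apply, hΦ] at this
    simpa [Matrix.sum_apply, Matrix.mul_apply, hΦ, Fin.sum_univ_one] using this
  have hAinv : ∀ l, A l * (A l)⁻¹ = 1 := fun l => Matrix.mul_nonsing_inv _ (isUnit_iff_ne_zero.mpr (hA l).det_pos.ne')
  have hinv : (∑ l, A l ⊗ₖ (φ l * (φ l)ᵀ))⁻¹ = ∑ l, (A l)⁻¹ ⊗ₖ (φ l * (φ l)ᵀ) := by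
    apply Matrix.inv_eq_right_inv
    rw [Finset.sum_mul_sum]
    have h3 : ∀ k l : Fin p, (A k ⊗ₖ (φ k * (φ k)ᵀ)) * ((A l)⁻¹ ⊗ₖ (φ l * (φ l)ᵀ))
        = if k = l then (1 : Matrix (Fin q) (Fin q) ℝ) ⊗ₖ (φ l * (φ l)ᵀ) else 0 := by
      intro k l
      rw [← Matrix.mul_kronecker_mul]
      have h4 : φ k * (φ k)ᵀ * (φ l * (φ l)ᵀ) = if k = l then φ l * (φ l)ᵀ else 0 := by
        rw [Matrix.mul_assoc, ← Matrix.mul_assoc (φ k)ᵀ, hφ k l]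
        split <;> simp_all
      rw [h4]
      split
      · subst ‹k = l›; rw [hAinv]
      · simp
    simp_rw [h3]
    simp only [Finset.sum_ite_eq, Finset.mem_univ, if_true]
    have h5 : ∑ l, (1 : Matrix (Fin q) (Fin q) ℝ) ⊗ₖ (φ l * (φ l)ᵀ)
        = (1 : Matrix (Fin q) (Fin q) ℝ) ⊗ₖ ∑ l, (φ l * (φ l)ᵀ) := by
      ext ⟨i, k⟩ ⟨j, m⟩
      simp [Matrix.sum_apply, Finset.mul_sum]
    rw [h5, hcomp, Matrix.one_kronecker_one]
  rw [hinv, Finset.sum_mul, Matrix.trace_sum]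
  refine Finset.sum_congr rfl fun l _ => ?_
  simp only [Matrix.trace, Matrix.diag_apply, Matrix.mul_apply, Matrix.reindex_apply,
    Matrix.submatrix_apply, kroneckerMap_apply, Matrix.one_apply, Fintype.sum_prod_type,
    Equiv.prodUnique_symm_apply, Finset.sum_mul, Finset.mul_sum, ite_mul, mul_ite,
    mul_zero, zero_mul, Finset.sum_ite_eq, Finset.sum_ite_eq', Finset.mem_univ, if_true,
    Fin.sum_univ_one]
  simp_rw [collapse1, collapse2]
  refine Finset.sum_congr rfl fun i _ => ?_
  rw [Finset.sum_comm]
  refine Finset.sum_congr rfl fun j _ => Finset.sum_congr rfl fun a _ =>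
    Finset.sum_congr rfl fun b _ => ?_
  simp [Fin.default_eq_zero]
  ring
end

section
/- Let p, q ∈ ℕ, let φ_1, ..., φ_p be an orthonormal basis of ℝ^p (viewed as p×1 matrices), let A_1, ..., A_p be q×q real symmetric positive definite matrices, and let C = Σ_{l=1}^p A_l ⊗ φ_l φ_lᵀ. Then for every x ∈ ℝ^{pq}: xᵀ C⁻¹ x = Σ_{l=1}^p θ_lᵀ (A_l)⁻¹ θ_l, where θ_l = (I_q ⊗ φ_lᵀ) x ∈ ℝ^q and ⊗ denotes the Kronecker product. -/
open Matrix Kronecker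

theorem stmt_14 (p q : ℕ)
    (φ : Fin p → Matrix (Fin p) (Fin 1) ℝ)
    (hφ : ∀ k l, (φ k)ᵀ * φ l = if k = l then 1 else 0)
    (A : Fin p → Matrix (Fin q) (Fin q) ℝ) (hA : ∀ l, (A l).PosDef)
    (x : Fin q × Fin p → ℝ)
    (θ : Fin p → Fin q → ℝ)
    (hθ : ∀ l i, θ l i = (((1 : Matrix (Fin q) (Fin q) ℝ) ⊗ₖ (φ l)ᵀ) *ᵥ x) (i, 0)) :
    x ⬝ᵥ ((∑ l, A l ⊗ₖ (φ l * (φ l)ᵀ))⁻¹ *ᵥ x) = ∑ l, θ l ⬝ᵥ ((A l)⁻¹ *ᵥ θ l) := by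
  -- completeness: ∑ φ l φ lᵀ = 1
  have hsum : (∑ l, φ l * (φ l)ᵀ) = (1 : Matrix (Fin p) (Fin p) ℝ) := by
    set Φ : Matrix (Fin p) (Fin p) ℝ := Matrix.of fun i l => φ l i 0 with hΦ
    have hΦ1 : Φᵀ * Φ = 1 := by
      ext k l
      have := congrFun (congrFun (hφ k l) 0) 0
      simpa [Matrix.mul_apply, Matrix.one_apply, Φ, Fin.sum_univ_one,
        apply_ite (fun M : Matrix (Fin 1) (Fin 1) ℝ => M 0 0)] using this
    have hΦ2 : Φ * Φᵀ = 1 := mul_eq_one_comm.mp hΦ1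
    ext a b
    have := congrFun (congrFun hΦ2 a) b
    simpa [Matrix.mul_apply, Φ, Matrix.sum_apply, Fin.sum_univ_one, mul_comm] using this
  -- the inverse of the partially separable covariance
  have hinv : (∑ l, A l ⊗ₖ (φ l * (φ l)ᵀ))⁻¹ = ∑ l, (A l)⁻¹ ⊗ₖ (φ l * (φ l)ᵀ) := by
    apply Matrix.inv_eq_right_inv
    rw [Finset.sum_mul_sum]
    have hterm : ∀ k l, (A k ⊗ₖ (φ k * (φ k)ᵀ)) * ((A l)⁻¹ ⊗ₖ (φ l * (φ l)ᵀ)) =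
        if k = l then (1 : Matrix (Fin q) (Fin q) ℝ) ⊗ₖ (φ k * (φ k)ᵀ) else 0 := by
      intro k l
      rw [← Matrix.mul_kronecker_mul]
      have hmul : (φ k * (φ k)ᵀ) * (φ l * (φ l)ᵀ) =
          if k = l then φ k * (φ k)ᵀ else 0 := by
        rw [Matrix.mul_assoc, ← Matrix.mul_assoc ((φ k)ᵀ), hφ k l]
        split
        · subst l; rw [Matrix.one_mul]
        · rw [Matrix.zero_mul, Matrix.mul_zero]
      rw [hmul]
      split
      · subst l
        rw [Matrix.mul_nonsing_inv _ (isUnit_iff_ne_zero.mpr (hA k).det_pos.ne')]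
      · rw [Matrix.kroneckerMap_zero_right]
        exact fun a => mul_zero a
    calc ∑ k, ∑ l, (A k ⊗ₖ (φ k * (φ k)ᵀ)) * ((A l)⁻¹ ⊗ₖ (φ l * (φ l)ᵀ))
        = ∑ k, (1 : Matrix (Fin q) (Fin q) ℝ) ⊗ₖ (φ k * (φ k)ᵀ) := by
          refine Finset.sum_congr rfl fun k _ => ?_
          rw [Finset.sum_eq_single k]
          · rw [hterm k k, if_pos rfl]
          · intro l _ hl; rw [hterm k l, if_neg (Ne.symm hl)]
          · intro h; exact absurd (Finset.mem_univ k) h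
      _ = 1 := by
          ext ⟨i, a⟩ ⟨j, b⟩
          rw [Matrix.sum_apply]
          simp only [Matrix.kroneckerMap_apply]
          rw [← Finset.mul_sum]
          have hab := congrFun (congrFun hsum a) b
          rw [Matrix.sum_apply] at hab
          rw [hab]
          simp only [Matrix.one_apply, Prod.ext_iff, ite_and, mul_ite, mul_one, mul_zero]
          by_cases hab' : a = b <;> by_cases hij : i = j <;> simp [hab', hij]
  rw [hinv]
  have hθ' : ∀ l i, θ l i = ∑ b, φ l b 0 * x (i, b) := by
    intro l i
    rw [hθ l i]
    simp [Matrix.mulVec, dotProduct, Fintype.sum_prod_type, Matrix.one_apply,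
      Finset.sum_ite_eq, mul_comm]
  have hmv : (∑ l, (A l)⁻¹ ⊗ₖ (φ l * (φ l)ᵀ)) *ᵥ x
      = ∑ l, ((A l)⁻¹ ⊗ₖ (φ l * (φ l)ᵀ)) *ᵥ x := by
    ext u
    rw [Finset.sum_apply]
    simp only [Matrix.mulVec, dotProduct, Matrix.sum_apply, Finset.sum_mul]
    exact Finset.sum_comm
  rw [hmv]
  have hdp : x ⬝ᵥ (∑ l, ((A l)⁻¹ ⊗ₖ (φ l * (φ l)ᵀ)) *ᵥ x)
      = ∑ l, x ⬝ᵥ (((A l)⁻¹ ⊗ₖ (φ l * (φ l)ᵀ)) *ᵥ x) := by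
    simp only [dotProduct, Finset.sum_apply, Finset.mul_sum]
    exact Finset.sum_comm
  rw [hdp]
  refine Finset.sum_congr rfl fun l _ => ?_
  set F : (Fin q × Fin p) → (Fin q × Fin p) → ℝ :=
    fun u v => (A l)⁻¹ u.1 v.1 * (φ l u.2 0 * x u) * (φ l v.2 0 * x v) with hF
  have hL : x ⬝ᵥ (((A l)⁻¹ ⊗ₖ (φ l * (φ l)ᵀ)) *ᵥ x) = ∑ u, ∑ v, F u v := by
    simp only [dotProduct, Matrix.mulVec, Matrix.kroneckerMap_apply,
      Matrix.mul_apply, Fin.sum_univ_one, Matrix.transpose_apply, Finset.mul_sum, hF]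
    refine Finset.sum_congr rfl fun u _ => Finset.sum_congr rfl fun v _ => by ring
  have hR : θ l ⬝ᵥ ((A l)⁻¹ *ᵥ θ l) = ∑ i, ∑ j, ∑ a, ∑ b, F (i, a) (j, b) := by
    simp only [dotProduct, Matrix.mulVec]
    refine Finset.sum_congr rfl fun i _ => ?_
    rw [Finset.mul_sum]
    refine Finset.sum_congr rfl fun j _ => ?_
    rw [hθ' l i, hθ' l j, Finset.sum_mul]
    refine Finset.sum_congr rfl fun a _ => ?_
    rw [Finset.mul_sum, Finset.mul_sum]
    refine Finset.sum_congr rfl fun b _ => by simp only [hF]; ring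
  have hswap : (∑ u, ∑ v, F u v) = ∑ i, ∑ j, ∑ a, ∑ b, F (i, a) (j, b) := by
    rw [Fintype.sum_prod_type]
    refine Finset.sum_congr rfl fun i _ => ?_
    simp only [Fintype.sum_prod_type]
    exact Finset.sum_comm
  rw [hL, hR, hswap]
end
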